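/- arXiv:1812.09554 — 2 statements merged into one kernel-verified Lean document; each statement's English description precedes it below -/
import Mathlib

section
/- Let Ω' ⊂ ℝⁿ be a domain and let u, v be positive C² functions on Ω' whose graphs are locally convex, and suppose σ_k(κ[v])(x) < σ_k(κ[u])(x) for all x ∈ Ω'. If u − v attains a local maximum at a point x₀ ∈ Ω', then u(x₀) ≠ v(x₀). -/
/-!
At a point `x₀` where `u - v` has a local maximum and `u = v`, also `Du = Dv`, so `w` and `γ`
agree for `u` and `v` and `A[v] - A[u] = (u / w) γ (D²v - D²u) γ`, which is positive semidefinite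
because `D²(u - v) ≤ 0` at a maximum. On the positive semidefinite cone `σ_k` is monotone: it is
the sum of the `k × k` principal minors, and `det A ≤ det (A + Q)` for `A, Q ⪰ 0`. Hence
`σ_k(κ[u]) ≤ σ_k(κ[v])` at `x₀`, contradicting the hypothesis.
-/

open scoped BigOperators
open Metric Set

noncomputable section

/-- `ℝⁿ` with the Euclidean metric. -/
abbrev En (n : ℕ) := EuclideanSpace ℝ (Fin n)

/-- First partial derivative `∂u/∂xᵢ`. -/
def pgrad {n : ℕ} (u : En n → ℝ) (x : En n) (i : Fin n) : ℝ :=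
  fderiv ℝ u x (EuclideanSpace.single i 1)

/-- Second partial derivative `∂²u/∂xᵢ∂xⱼ`. -/
def phess {n : ℕ} (u : En n → ℝ) (x : En n) (i j : Fin n) : ℝ :=
  fderiv ℝ (fun y => fderiv ℝ u y (EuclideanSpace.single j 1)) x (EuclideanSpace.single i 1)

/-- The gradient of `u` at `x` as a vector in `ℝⁿ`. -/
def gradVec {n : ℕ} (u : En n → ℝ) (x : En n) : En n :=
  WithLp.toLp 2 (fun i => pgrad u x i)

/-- `w = √(1 + |Du|²)`. -/
def wgt {n : ℕ} (u : En n → ℝ) (x : En n) : ℝ :=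
  Real.sqrt (1 + ∑ i, pgrad u x i ^ 2)

/-- `γ^{ik} = δ_{ik} − uᵢ u_k / (w(1+w))`. -/
def gam {n : ℕ} (u : En n → ℝ) (x : En n) (i k : Fin n) : ℝ :=
  (if i = k then (1:ℝ) else 0) - pgrad u x i * pgrad u x k / (wgt u x * (1 + wgt u x))

/-- The matrix `A[u]`, whose eigenvalues are the hyperbolic principal curvatures of the
vertical graph of `u` in the half-space model of `H^{n+1}`. -/
def curvMat {n : ℕ} (u : En n → ℝ) (x : En n) : Matrix (Fin n) (Fin n) ℝ :=
  Matrix.of fun i j => (1 / wgt u x) *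
    ((if i = j then (1:ℝ) else 0) +
      u x * ∑ k, ∑ l, gam u x i k * phess u x k l * gam u x l j)

/-- The `k`-th elementary symmetric polynomial of the eigenvalues of the `n × n` matrix `M`,
read off from the characteristic polynomial: `charpoly M = ∏ (X - λᵢ)`, so
`e_k(λ) = (-1)^k · coeff (n-k)`. -/
def sigmaElem {n : ℕ} (k : ℕ) (M : Matrix (Fin n) (Fin n) ℝ) : ℝ :=
  (-1 : ℝ) ^ k * M.charpoly.coeff (n - k)

/-- A bounded domain in `ℝⁿ` whose boundary is a (finite disjoint union of) smooth closed
embedded hypersurface(s), expressed via local smooth defining functions. -/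
def SmoothBoundedDomain {n : ℕ} (Ω : Set (En n)) : Prop :=
  IsOpen Ω ∧ Bornology.IsBounded Ω ∧ Ω.Nonempty ∧
  ∀ x ∈ frontier Ω, ∃ (U : Set (En n)) (ρ : En n → ℝ),
    IsOpen U ∧ x ∈ U ∧ ContDiff ℝ (⊤ : ℕ∞) ρ ∧ (∀ y ∈ U, fderiv ℝ ρ y ≠ 0) ∧
    Ω ∩ U = {y ∈ U | ρ y < 0} ∧ frontier Ω ∩ U = {y ∈ U | ρ y = 0}

/-- The subsolution setting of the paper. -/
structure SubsolutionSetting {n : ℕ} (k : ℕ) (Ω : Set (En n)) (ψ : En n → ℝ → ℝ)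
    (ubar : En n → ℝ) : Prop where
  domain : SmoothBoundedDomain Ω
  ψpos : ∀ x z, 0 ≤ z → 0 < ψ x z
  ψsmooth : ContDiffOn ℝ (⊤ : ℕ∞) (fun p : En n × ℝ => ψ p.1 p.2) {p : En n × ℝ | 0 < p.2}
  ψcont : ContinuousOn (fun p : En n × ℝ => ψ p.1 p.2) {p : En n × ℝ | 0 ≤ p.2}
  ubar4 : ContDiffOn ℝ 4 ubar Ω
  ubar2 : ContDiffOn ℝ 2 ubar (closure Ω)
  ubarpos : ∀ x ∈ Ω, 0 < ubar x
  ubarconv : ∀ x ∈ Ω, (curvMat ubar x).PosDef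
  ubarsub : ∀ x ∈ Ω, ψ x (ubar x) ≤ sigmaElem k (curvMat ubar x)
  ubarbdry : ∀ x ∈ frontier Ω, ubar x = 0

/-- Membership of the point `(x, t) ∈ ℝⁿ × ℝ = ℝ^{n+1}` in the open Euclidean ball of radius `R`
centered at `(c', h)`. -/
def inBallH {n : ℕ} (c' : En n) (h R : ℝ) (x : En n) (t : ℝ) : Prop :=
  dist x c' ^ 2 + (t - h) ^ 2 < R ^ 2

/-- Membership of `(x, t)` in the sphere of radius `R` centered at `(c', h)`. -/
def onSphereH {n : ℕ} (c' : En n) (h R : ℝ) (x : En n) (t : ℝ) : Prop :=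
  dist x c' ^ 2 + (t - h) ^ 2 = R ^ 2

/-- The "almost round" assumption. -/
def AlmostRound {n : ℕ} (k : ℕ) (Ω : Set (En n)) (ψ : En n → ℝ → ℝ) : Prop :=
  ∃ (σs σb Rs Rb : ℝ) (as' ab' : En n),
    0 < σs ∧ σs < σb ∧ σb < 1 ∧ 0 < Rs ∧ Rs < Rb ∧
    (∀ x ∈ Ω, ∀ z : ℝ, 0 < z → (n.choose k : ℝ) * σb ^ k < ψ x z) ∧
    (∀ x : En n, inBallH as' (-(σs * Rs)) Rs x 0 → x ∈ Ω) ∧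
    (∀ x ∈ Ω, inBallH ab' (-(σb * Rb)) Rb x 0) ∧
    (∀ (x : En n) (t : ℝ), inBallH as' (-(σs * Rs)) Rs x t → inBallH ab' (-(σb * Rb)) Rb x t) ∧
    (∃! p : En n × ℝ, onSphereH as' (-(σs * Rs)) Rs p.1 p.2 ∧
      onSphereH ab' (-(σb * Rb)) Rb p.1 p.2)

/-- Condition (1.8): the Euclidean Hessian of `ū / σ_k^{1/k}(κ[ū])` is positive semidefinite. -/
def Cond18 {n : ℕ} (k : ℕ) (Ω : Set (En n)) (ubar : En n → ℝ) : Prop :=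
  ∀ x ∈ Ω, (Matrix.of fun α β : Fin n =>
    phess (fun y => ubar y / (sigmaElem k (curvMat ubar y)) ^ ((k:ℝ)⁻¹)) x α β).PosSemidef

/-- Coordinate directions in `ℝⁿ × ℝ = ℝ^{n+1}`. -/
def dirv {n : ℕ} (i : Fin (n+1)) : En n × ℝ :=
  if h : (i : ℕ) < n then (EuclideanSpace.single ⟨i, h⟩ 1, 0) else (0, 1)

/-- First directional derivative. -/
def D1 {n : ℕ} (Ψ : En n × ℝ → ℝ) (p v : En n × ℝ) : ℝ := fderiv ℝ Ψ p v

/-- Second directional derivative. -/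
def D2 {n : ℕ} (Ψ : En n × ℝ → ℝ) (p v w : En n × ℝ) : ℝ :=
  fderiv ℝ (fun q => fderiv ℝ Ψ q w) p v

/-- The `(n+1) × (n+1)` matrix of condition (1.9). -/
def Cond19Mat {n : ℕ} (k : ℕ) (ψ : En n → ℝ → ℝ) (x : En n) (z : ℝ) :
    Matrix (Fin (n+1)) (Fin (n+1)) ℝ :=
  Matrix.of fun i j =>
    ((k+1 : ℝ)/(k:ℝ)) * D1 (fun p => ψ p.1 p.2) (x, z) (dirv i)
        * D1 (fun p => ψ p.1 p.2) (x, z) (dirv j) / ψ x z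
      - D2 (fun p => ψ p.1 p.2) (x, z) (dirv i) (dirv j)
      + (if (i:ℕ) < n then
           (if (j:ℕ) < n then
              (if i = j then D1 (fun p => ψ p.1 p.2) (x, z) (0,1) / z - (k:ℝ) * ψ x z / z^2
               else 0)
            else - D1 (fun p => ψ p.1 p.2) (x, z) (dirv i) / z)
         else
           (if (j:ℕ) < n then - D1 (fun p => ψ p.1 p.2) (x, z) (dirv j) / z
            else - (k:ℝ) * ψ x z / z^2 - D1 (fun p => ψ p.1 p.2) (x, z) (0,1) / z))

/-- Condition (1.9). -/
def Cond19 {n : ℕ} (k : ℕ) (Ω : Set (En n)) (ψ : En n → ℝ → ℝ) : Prop :=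
  ∀ x ∈ Ω, ∀ z : ℝ, 0 < z → (Cond19Mat k ψ x z).PosSemidef

open scoped Matrix

namespace Matrix

variable {ι : Type*} [Fintype ι] [DecidableEq ι]

theorem PosSemidef.one_le_det_one_add {S : Matrix ι ι ℝ} (hS : S.PosSemidef) :
    1 ≤ (1 + S).det := by
  have hsa : IsSelfAdjoint S := hS.isHermitian
  have hcfc : 1 + S = cfc (fun x : ℝ => 1 + x) S := by
    rw [cfc_add .., cfc_const_one .., cfc_id' ..]
  rw [hcfc, hS.isHermitian.cfc_eq]
  simp only [IsHermitian.cfc, RCLike.ofReal_real_eq_id, CompTriple.comp_eq, det_map, det_diagonal,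
    Function.comp_apply]
  calc (1 : ℝ) = ∏ _ : ι, (1 : ℝ) := by simp
    _ ≤ _ := Finset.prod_le_prod (fun _ _ => zero_le_one) fun i _ => by
      linarith [hS.eigenvalues_nonneg i]

open scoped MatrixOrder in
theorem PosDef.det_le_det_add {A Q : Matrix ι ι ℝ} (hA : A.PosDef) (hQ : Q.PosSemidef) :
    A.det ≤ (A + Q).det := by
  set s := CFC.sqrt A
  have hss : s * s = A := CFC.sqrt_mul_sqrt_self A hA.posSemidef.nonneg
  have hs : IsUnit s.det :=
    (isUnit_iff_isUnit_det s).mp ((CFC.isUnit_sqrt_iff A hA.posSemidef.nonneg).mpr hA.isUnit)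
  have hsh : s⁻¹ᴴ = s⁻¹ := by
    rw [conjTranspose_nonsing_inv, nonneg_iff_posSemidef.mp (CFC.sqrt_nonneg A) |>.isHermitian]
  have hfactor : A + Q = s * (1 + s⁻¹ * Q * s⁻¹) * s := by
    rw [Matrix.mul_add, Matrix.add_mul, Matrix.mul_one, hss, ← Matrix.mul_assoc,
      ← Matrix.mul_assoc, mul_nonsing_inv s hs, Matrix.one_mul, Matrix.mul_assoc,
      nonsing_inv_mul s hs, Matrix.mul_one]
  have hone : 1 ≤ (1 + s⁻¹ * Q * s⁻¹).det := by
    have hR := hQ.conjTranspose_mul_mul_same s⁻¹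
    rw [hsh] at hR
    exact hR.one_le_det_one_add
  rw [hfactor, det_mul, det_mul, ← hss, det_mul]
  nlinarith [mul_self_nonneg s.det]

theorem PosSemidef.det_le_det_add {A Q : Matrix ι ι ℝ} (hA : A.PosSemidef)
    (hQ : Q.PosSemidef) : A.det ≤ (A + Q).det := by
  by_cases hdet : A.det = 0
  · simpa [hdet] using (hA.add hQ).det_nonneg
  · exact (hA.posDef_iff_det_ne_zero.mpr hdet).det_le_det_add hQ

end Matrix

theorem sigmaElem_eq_sum_det_submatrix {n k : ℕ} (hk : k ≤ n) (A : Matrix (Fin n) (Fin n) ℝ) :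
    sigmaElem k A = ∑ s ∈ Finset.univ.powersetCard k,
      (A.submatrix (Subtype.val : s → Fin n) (Subtype.val : s → Fin n)).det := by
  have h := A.charpoly_coeff_eq_sum_minors k (by simpa using hk)
  rw [Fintype.card_fin] at h
  rw [sigmaElem, h, ← mul_assoc, ← pow_add, Even.neg_one_pow ⟨k, rfl⟩, one_mul]

theorem sigmaElem_le_sigmaElem {n k : ℕ} (hk : k ≤ n) {A B : Matrix (Fin n) (Fin n) ℝ}
    (hA : A.PosSemidef) (hBA : (B - A).PosSemidef) : sigmaElem k A ≤ sigmaElem k B := by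
  rw [sigmaElem_eq_sum_det_submatrix hk, sigmaElem_eq_sum_det_submatrix hk]
  refine Finset.sum_le_sum fun s _ => ?_
  rw [← add_sub_cancel A B]
  exact (hA.submatrix (Subtype.val : s → Fin n)).det_le_det_add
    (hBA.submatrix (Subtype.val : s → Fin n))

open Filter Topology

theorem IsLocalMin.deriv_deriv_nonneg {g : ℝ → ℝ} {a : ℝ} (h : IsLocalMin g a)
    (hc : ContinuousAt g a) : 0 ≤ deriv (deriv g) a := by
  by_contra! hneg
  have hmax := isLocalMax_of_deriv_deriv_neg hneg h.deriv_eq_zero hc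
  have hconst : g =ᶠ[𝓝 a] fun _ => g a :=
    (h.and hmax).mono fun _ hx => le_antisymm hx.2 hx.1
  have hderiv : deriv g =ᶠ[𝓝 a] fun _ => 0 := hconst.deriv.trans (by simp)
  simp [hderiv.deriv_eq] at hneg

section SecondDerivative

variable {E : Type*} [NormedAddCommGroup E] [NormedSpace ℝ E] {f : E → ℝ} {x : E}

theorem IsLocalMin.fderiv_fderiv_apply_self_nonneg (h : IsLocalMin f x)
    (hf : ∀ᶠ y in 𝓝 x, DifferentiableAt ℝ f y) (hf' : DifferentiableAt ℝ (fderiv ℝ f) x)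
    (v : E) : 0 ≤ fderiv ℝ (fderiv ℝ f) x v v := by
  have hline : ∀ t : ℝ, HasDerivAt (fun t : ℝ => x + t • v) v t := fun t => by
    simpa using ((hasDerivAt_id t).smul_const v).const_add x
  have htendsto : Tendsto (fun t : ℝ => x + t • v) (𝓝 0) (𝓝 x) := by
    simpa using (hline 0).continuousAt.tendsto
  have hderiv :
      deriv (fun t => f (x + t • v)) =ᶠ[𝓝 (0 : ℝ)] fun t => fderiv ℝ f (x + t • v) v :=
    (htendsto.eventually hf).mono fun t ht => (ht.hasFDerivAt.comp_hasDerivAt t (hline t)).deriv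
  have hsecond :
      HasDerivAt (fun t => fderiv ℝ f (x + t • v) v) (fderiv ℝ (fderiv ℝ f) x v v) (0 : ℝ) := by
    have hx : HasFDerivAt (fderiv ℝ f) (fderiv ℝ (fderiv ℝ f) x) (x + (0 : ℝ) • v) := by
      simpa using hf'.hasFDerivAt
    have hcomp := hx.comp_hasDerivAt (0 : ℝ) (hline 0)
    have happly := hcomp.clm_apply (hasDerivAt_const (0 : ℝ) v)
    simp only [map_zero, add_zero, Function.comp_apply] at happly
    exact happly
  have hmin : IsLocalMin (fun t : ℝ => f (x + t • v)) 0 := by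
    simpa [IsLocalMin, IsMinFilter] using htendsto.eventually h
  rw [← (hsecond.congr_of_eventuallyEq hderiv).deriv]
  exact hmin.deriv_deriv_nonneg
    (hf.self_of_nhds.continuousAt.comp_of_eq (hline 0).continuousAt (by simp))

theorem IsLocalMin.isPosSemidef_fderiv_fderiv (h : IsLocalMin f x) (hf : ContDiffAt ℝ 2 f x) :
    (fderiv ℝ (fderiv ℝ f) x).toLinearMap₁₂.IsPosSemidef where
  eq v w := by simpa using (hf.isSymmSndFDerivAt (by simp)) v w
  nonneg := h.fderiv_fderiv_apply_self_nonneg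
    ((hf.eventually (by simp)).mono fun _ hy => hy.differentiableAt (by simp))
    ((hf.fderiv_right (m := 1) le_rfl).differentiableAt one_ne_zero)

end SecondDerivative

section Hessian

variable {n : ℕ} {u v : En n → ℝ} {x : En n}

theorem phess_eq_fderiv_fderiv (hu : DifferentiableAt ℝ (fderiv ℝ u) x) (i j : Fin n) :
    phess u x i j =
      fderiv ℝ (fderiv ℝ u) x (EuclideanSpace.single i 1) (EuclideanSpace.single j 1) := by
  simp [phess, fderiv_clm_apply hu (differentiableAt_const _)]

theorem phess_sub (hu : ContDiffAt ℝ 2 u x) (hv : ContDiffAt ℝ 2 v x) :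
    phess (fun y => u y - v y) x = phess u x - phess v x := by
  have hD : ∀ {g : En n → ℝ}, ContDiffAt ℝ 2 g x → DifferentiableAt ℝ (fderiv ℝ g) x :=
    fun hg => (hg.fderiv_right (m := 1) le_rfl).differentiableAt one_ne_zero
  have hfderiv : fderiv ℝ (fun y => u y - v y) =ᶠ[𝓝 x] fun y => fderiv ℝ u y - fderiv ℝ v y :=
    ((hu.eventually (by simp)).and (hv.eventually (by simp))).mono fun y hy =>
      fderiv_fun_sub (hy.1.differentiableAt (by simp)) (hy.2.differentiableAt (by simp))
  ext i j
  rw [phess_eq_fderiv_fderiv (hD (hu.sub hv)), hfderiv.fderiv_eq, fderiv_fun_sub (hD hu) (hD hv),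
    Pi.sub_apply, Pi.sub_apply, phess_eq_fderiv_fderiv (hD hu), phess_eq_fderiv_fderiv (hD hv)]
  rfl

theorem IsLocalMin.posSemidef_phess {f : En n → ℝ} (h : IsLocalMin f x)
    (hf : ContDiffAt ℝ 2 f x) : (Matrix.of (phess f x)).PosSemidef := by
  have hmat : Matrix.of (phess f x) =
      LinearMap.toMatrix₂ (EuclideanSpace.basisFun (Fin n) ℝ).toBasis
        (EuclideanSpace.basisFun (Fin n) ℝ).toBasis (fderiv ℝ (fderiv ℝ f) x).toLinearMap₁₂ := by
    ext i j
    simp [phess_eq_fderiv_fderiv ((hf.fderiv_right (m := 1) le_rfl).differentiableAt one_ne_zero)]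
  rw [hmat, ← LinearMap.isPosSemidef_iff_posSemidef_toMatrix]
  exact h.isPosSemidef_fderiv_fderiv hf

end Hessian

section CurvatureMatrix

variable {n : ℕ} {u v : En n → ℝ} {x : En n}

theorem gam_comm (i k : Fin n) : gam u x i k = gam u x k i := by
  simp only [gam, eq_comm (a := i), mul_comm (pgrad u x i)]

theorem curvMat_sub_curvMat (hval : u x = v x) (hgrad : pgrad u x = pgrad v x) :
    curvMat v x - curvMat u x = (u x / wgt u x) •
      (Matrix.of (gam u x) * Matrix.of (phess v x - phess u x) * Matrix.of (gam u x)) := by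
  have hwgt : wgt u x = wgt v x := by rw [wgt, wgt, hgrad]
  have hgam : gam u x = gam v x := by funext i k; rw [gam, gam, hgrad, hwgt]
  ext i j
  simp only [curvMat, Matrix.sub_apply, Matrix.of_apply, Matrix.smul_apply, smul_eq_mul,
    Matrix.mul_apply, Pi.sub_apply, ← hgam, ← hwgt, ← hval, mul_sub, sub_mul,
    Finset.sum_sub_distrib, Finset.sum_mul]
  rw [Finset.sum_comm (f := fun l k => gam u x i k * phess v x k l * gam u x l j),
    Finset.sum_comm (f := fun l k => gam u x i k * phess u x k l * gam u x l j)]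
  ring

theorem posSemidef_curvMat_sub_of_isLocalMax_sub (hu : ContDiffAt ℝ 2 u x)
    (hv : ContDiffAt ℝ 2 v x) (hpos : 0 ≤ u x) (hval : u x = v x)
    (hmax : IsLocalMax (fun y => u y - v y) x) : (curvMat v x - curvMat u x).PosSemidef := by
  have hgrad : pgrad u x = pgrad v x := by
    have h := hmax.fderiv_eq_zero
    rw [fderiv_fun_sub (hu.differentiableAt (by simp)) (hv.differentiableAt (by simp)),
      sub_eq_zero] at h
    funext i
    rw [pgrad, pgrad, h]
  have hmin : IsLocalMin (fun y => v y - u y) x := by simpa using hmax.neg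
  have hhess : (Matrix.of (phess v x - phess u x)).PosSemidef := by
    simpa [phess_sub hv hu] using hmin.posSemidef_phess (hv.sub hu)
  have hsymm : (Matrix.of (gam u x))ᴴ = Matrix.of (gam u x) := by
    ext i k
    simp [gam_comm i k]
  rw [curvMat_sub_curvMat hval hgrad]
  refine Matrix.PosSemidef.smul ?_ (div_nonneg hpos (Real.sqrt_nonneg _))
  have h := hhess.conjTranspose_mul_mul_same (Matrix.of (gam u x))
  rwa [hsymm] at h

end CurvatureMatrix

theorem statement4_general {n : ℕ} (k : ℕ) (hkn : k ≤ n)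
    (Ω' : Set (En n)) (hΩo : IsOpen Ω')
    (u v : En n → ℝ)
    (hu : ContDiffOn ℝ 2 u Ω') (hv : ContDiffOn ℝ 2 v Ω')
    (hupos : ∀ x ∈ Ω', 0 < u x)
    (huconv : ∀ x ∈ Ω', (curvMat u x).PosSemidef)
    (hlt : ∀ x ∈ Ω', sigmaElem k (curvMat v x) < sigmaElem k (curvMat u x))
    (x₀ : En n) (hx₀ : x₀ ∈ Ω')
    (hmax : IsLocalMax (fun x => u x - v x) x₀) :
    u x₀ ≠ v x₀ := by
  intro hval
  have hdiff := posSemidef_curvMat_sub_of_isLocalMax_sub (hu.contDiffAt (hΩo.mem_nhds hx₀))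
    (hv.contDiffAt (hΩo.mem_nhds hx₀)) (hupos x₀ hx₀).le hval hmax
  exact (hlt x₀ hx₀).not_ge (sigmaElem_le_sigmaElem hkn (huconv x₀ hx₀) hdiff)

/-- Lemma: maximum-principle type comparison: if `σ_k(κ[v]) < σ_k(κ[u])` on a
domain and `u − v` has a local maximum at `x₀`, then `u(x₀) ≠ v(x₀)`. -/
theorem statement4 {n : ℕ} (k : ℕ) (hk1 : 1 ≤ k) (hkn : k ≤ n)
    (Ω' : Set (En n)) (hΩo : IsOpen Ω') (hΩc : IsConnected Ω')
    (u v : En n → ℝ)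
    (hu : ContDiffOn ℝ 2 u Ω') (hv : ContDiffOn ℝ 2 v Ω')
    (hupos : ∀ x ∈ Ω', 0 < u x) (hvpos : ∀ x ∈ Ω', 0 < v x)
    (huconv : ∀ x ∈ Ω', (curvMat u x).PosSemidef)
    (hvconv : ∀ x ∈ Ω', (curvMat v x).PosSemidef)
    (hlt : ∀ x ∈ Ω', sigmaElem k (curvMat v x) < sigmaElem k (curvMat u x))
    (x₀ : En n) (hx₀ : x₀ ∈ Ω')
    (hmax : IsLocalMax (fun x => u x - v x) x₀) :
    u x₀ ≠ v x₀ :=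
  statement4_general k hkn Ω' hΩo u v hu hv hupos huconv hlt x₀ hx₀ hmax
end
end

section
/- Fix x₀ ∈ ℝⁿ, a positive C² function u defined near x₀ with A(D²u(x₀), Du(x₀), u(x₀)) positive definite, and ψ(x₀) > 0. Define Φ(t) = σ_k^{1/k}( λ( A(D²u(x₀), Du(x₀), t) ) ) for t > 0 near u(x₀). If Φ(u(x₀)) = ψ(x₀)·u(x₀), then Φ'(u(x₀)) < ψ(x₀). -/
/-!
Write `A(t) = w⁻¹ (I + t M)` with `M = γ r γ`; `M` is symmetric because `A(u(x₀))` is. If `μᵢ`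
are the eigenvalues of `M`, the eigenvalues of `A(t)` are `qᵢ(t) = w⁻¹ (1 + t μᵢ)`, so
`Φ(t) = σ_k(q(t))^{1/k}`, and positive definiteness gives `qᵢ(u(x₀)) > 0`. Euler's identity
`k σ_k(q) = Σᵢ qᵢ ∂ᵢσ_k(q)` together with `qᵢ − t qᵢ' = w⁻¹ > 0` and `∂ᵢσ_k(q) > 0` gives
`t σ_k(q(t))' < k σ_k(q(t))`, i.e. `t Φ'(t) < Φ(t)`. At `t = u(x₀)` the right side is
`ψ(x₀) u(x₀)`; divide by `u(x₀) > 0`.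
-/

open scoped BigOperators
open Metric Set

noncomputable section

/-- The matrix `A(r,p,t) = (1/w)(I + t·γ r γ)` with `w = √(1+|p|²)`,
`γ = I − p⊗p/(w(1+w))`. -/
def Amat {n : ℕ} (r : Matrix (Fin n) (Fin n) ℝ) (p : En n) (t : ℝ) :
    Matrix (Fin n) (Fin n) ℝ :=
  (Real.sqrt (1 + ∑ i, p i ^ 2))⁻¹ •
    ((1 : Matrix (Fin n) (Fin n) ℝ) + t •
      ((Matrix.of fun i j => (if i = j then (1:ℝ) else 0) -
          p i * p j / (Real.sqrt (1 + ∑ i, p i ^ 2) * (1 + Real.sqrt (1 + ∑ i, p i ^ 2)))) *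
        r *
        (Matrix.of fun i j => (if i = j then (1:ℝ) else 0) -
          p i * p j / (Real.sqrt (1 + ∑ i, p i ^ 2) * (1 + Real.sqrt (1 + ∑ i, p i ^ 2))))))

open Matrix Polynomial Finset
open scoped MatrixOrder

theorem Matrix.IsHermitian.of_smul_one_add_smul {ι : Type*} [DecidableEq ι] {M : Matrix ι ι ℝ}
    {c t : ℝ} (hc : c ≠ 0) (ht : t ≠ 0) (h : (c • (1 + t • M)).IsHermitian) : M.IsHermitian := by
  have hM : M = t⁻¹ • (c⁻¹ • (c • (1 + t • M)) - 1) := by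
    rw [smul_smul, inv_mul_cancel₀ hc, one_smul, add_sub_cancel_left, smul_smul,
      inv_mul_cancel₀ ht, one_smul]
  rw [hM]
  exact ((h.smul (k := c⁻¹) rfl).sub isHermitian_one).smul rfl

section Spectral

variable {ι : Type*} [Fintype ι] [DecidableEq ι]

theorem Matrix.IsHermitian.cfc_mul_one_add_mul {M : Matrix ι ι ℝ} (hM : M.IsHermitian)
    (c t : ℝ) : cfc (fun x => c * (1 + t * x)) M = c • (1 + t • M) := by
  have : IsSelfAdjoint M := hM
  rw [cfc_const_mul .., cfc_const_add .., cfc_const_mul .., cfc_id' ..]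
  simp [Algebra.algebraMap_eq_smul_one]

theorem Matrix.IsHermitian.charpoly_smul_one_add_smul {M : Matrix ι ι ℝ} (hM : M.IsHermitian)
    (c t : ℝ) :
    (c • (1 + t • M)).charpoly = ∏ i, (X - C (c * (1 + t * hM.eigenvalues i))) := by
  rw [← hM.cfc_mul_one_add_mul, hM.charpoly_cfc_eq]
  rfl

theorem Matrix.IsHermitian.mul_one_add_mul_eigenvalues_pos {M : Matrix ι ι ℝ}
    (hM : M.IsHermitian) {c t : ℝ} (h : (c • (1 + t • M)).PosDef) (i : ι) :
    0 < c * (1 + t * hM.eigenvalues i) := by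
  have : IsSelfAdjoint M := hM
  rw [← hM.cfc_mul_one_add_mul, ← isStrictlyPositive_iff_posDef,
    cfc_isStrictlyPositive_iff ..] at h
  exact h _ (hM.eigenvalues_mem_spectrum_real i)

end Spectral

theorem sigmaElem_eq_sum_prod_of_charpoly_eq {n k : ℕ} (hkn : k ≤ n)
    {M : Matrix (Fin n) (Fin n) ℝ} {d : Fin n → ℝ} (h : M.charpoly = ∏ i, (X - C (d i))) :
    sigmaElem k M = ∑ S ∈ powersetCard k univ, ∏ i ∈ S, d i := by
  simp_rw [sigmaElem, h, sub_eq_add_neg, ← C_neg]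
  rw [prod_X_add_C_coeff _ _ (by simp), card_univ, Fintype.card_fin, Nat.sub_sub_self hkn,
    mul_sum]
  refine sum_congr rfl fun S hS => ?_
  rw [prod_neg, (mem_powersetCard.1 hS).2, ← mul_assoc, ← mul_pow, neg_one_mul, neg_neg,
    one_pow, one_mul]

theorem card_mul_prod_eq_sum_mul_prod_erase {ι : Type*} [DecidableEq ι] (S : Finset ι)
    (q : ι → ℝ) :
    #S * ∏ i ∈ S, q i = ∑ i ∈ S, q i * ∏ j ∈ S.erase i, q j := by
  rw [sum_congr rfl fun i hi => mul_prod_erase S q hi, sum_const, nsmul_eq_mul]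

section Euler

variable {ι : Type*} [Fintype ι] [DecidableEq ι] {k : ℕ}

theorem mul_sum_sum_prod_erase_lt (hk : 1 ≤ k) (hkn : k ≤ Fintype.card ι) {q q' : ι → ℝ}
    {t : ℝ} (hq : ∀ i, 0 < q i) (hq' : ∀ i, t * q' i < q i) :
    t * ∑ S ∈ powersetCard k univ, ∑ i ∈ S, (∏ j ∈ S.erase i, q j) * q' i <
      k * ∑ S ∈ powersetCard k univ, ∏ i ∈ S, q i := by
  rw [mul_sum, mul_sum]
  refine sum_lt_sum_of_nonempty (powersetCard_nonempty.2 (by simpa using hkn)) fun S hS => ?_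
  rw [← (mem_powersetCard.1 hS).2, card_mul_prod_eq_sum_mul_prod_erase, mul_sum]
  have hS : S.Nonempty := card_pos.1 (by rw [(mem_powersetCard.1 hS).2]; omega)
  refine sum_lt_sum_of_nonempty hS fun i _ => ?_
  have hP : 0 < ∏ j ∈ S.erase i, q j := prod_pos fun j _ => hq j
  nlinarith [hq' i]

theorem mul_deriv_rpow_inv_lt {g : ℝ → ℝ} {g' t r : ℝ} (hg : HasDerivAt g g' t) (hgt : 0 < g t)
    (hr : 0 < r) (h : t * g' < r * g t) :
    t * deriv (fun s => g s ^ r⁻¹) t < g t ^ r⁻¹ := by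
  rw [(hg.rpow_const (Or.inl hgt.ne')).deriv]
  calc t * (g' * r⁻¹ * g t ^ (r⁻¹ - 1)) = r⁻¹ * g t ^ (r⁻¹ - 1) * (t * g') := by ring
    _ < r⁻¹ * g t ^ (r⁻¹ - 1) * (r * g t) := by gcongr
    _ = g t ^ r⁻¹ := by
      rw [mul_mul_mul_comm, inv_mul_cancel₀ hr.ne', one_mul, ← Real.rpow_add_one hgt.ne',
        sub_add_cancel]

theorem mul_deriv_sum_prod_rpow_inv_lt (hk : 1 ≤ k) (hkn : k ≤ Fintype.card ι)
    {q : ι → ℝ → ℝ} {q' : ι → ℝ} {t : ℝ} (hderiv : ∀ i, HasDerivAt (q i) (q' i) t)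
    (hq : ∀ i, 0 < q i t) (hq' : ∀ i, t * q' i < q i t) :
    t * deriv (fun s => (∑ S ∈ powersetCard k univ, ∏ i ∈ S, q i s) ^ (k : ℝ)⁻¹) t <
      (∑ S ∈ powersetCard k univ, ∏ i ∈ S, q i t) ^ (k : ℝ)⁻¹ := by
  have hg := HasDerivAt.fun_sum fun S (_ : S ∈ powersetCard k univ) =>
    HasDerivAt.fun_finsetProd (u := S) fun i _ => hderiv i
  have hgt : 0 < ∑ S ∈ powersetCard k univ, ∏ i ∈ S, q i t :=
    sum_pos (fun S _ => prod_pos fun i _ => hq i)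
      (powersetCard_nonempty.2 (by simpa using hkn))
  refine mul_deriv_rpow_inv_lt hg hgt (by positivity) ?_
  simp_rw [smul_eq_mul]
  exact mul_sum_sum_prod_erase_lt hk hkn hq hq'

end Euler

theorem statement14_general {n : ℕ} (k : ℕ) (hk1 : 1 ≤ k) (hkn : k ≤ n)
    (x₀ : En n) (u : En n → ℝ) (hupos : 0 < u x₀)
    (ψ0 : ℝ)
    (hpd : (Amat (Matrix.of (phess u x₀)) (gradVec u x₀) (u x₀)).PosDef)
    (Φ : ℝ → ℝ)
    (hΦ : Φ = fun t =>
      (sigmaElem k (Amat (Matrix.of (phess u x₀)) (gradVec u x₀) t)) ^ ((k:ℝ)⁻¹))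
    (heq : Φ (u x₀) = ψ0 * u x₀) :
    deriv Φ (u x₀) < ψ0 := by
  set p := gradVec u x₀
  set w := Real.sqrt (1 + ∑ i, p i ^ 2)
  set γ : Matrix (Fin n) (Fin n) ℝ := Matrix.of fun i j =>
    (if i = j then (1:ℝ) else 0) - p i * p j / (w * (1 + w))
  set M := γ * Matrix.of (phess u x₀) * γ
  have hA : ∀ t, Amat (Matrix.of (phess u x₀)) p t = w⁻¹ • (1 + t • M) := fun _ => rfl
  have hw : 0 < w⁻¹ := inv_pos.2 (Real.sqrt_pos.2 (by positivity))
  rw [hA] at hpd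
  have hM : M.IsHermitian := hpd.isHermitian.of_smul_one_add_smul hw.ne' hupos.ne'
  have hΦq : Φ = fun t => (∑ S ∈ powersetCard k univ,
      ∏ i ∈ S, w⁻¹ * (1 + t * hM.eigenvalues i)) ^ (k : ℝ)⁻¹ := by
    rw [hΦ]
    funext t
    rw [hA, sigmaElem_eq_sum_prod_of_charpoly_eq hkn (hM.charpoly_smul_one_add_smul _ _)]
  have key := mul_deriv_sum_prod_rpow_inv_lt hk1 (by simpa using hkn)
    (q := fun i t => w⁻¹ * (1 + t * hM.eigenvalues i)) (q' := fun i => w⁻¹ * hM.eigenvalues i)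
    (fun i => by simpa using ((hasDerivAt_mul_const _).const_add 1).const_mul w⁻¹)
    (hM.mul_one_add_mul_eigenvalues_pos hpd) (fun i => by linarith)
  simp only [hΦq] at heq
  rw [← hΦq, heq, mul_comm ψ0] at key
  exact lt_of_mul_lt_mul_left key hupos.le

/-- Lemma 6.1: if `Φ(t) = σ_k^{1/k}(λ(A(D²u(x₀),Du(x₀),t)))` and
`Φ(u(x₀)) = ψ(x₀)·u(x₀)`, then `Φ'(u(x₀)) < ψ(x₀)`. -/
theorem statement14 {n : ℕ} (k : ℕ) (hk1 : 1 ≤ k) (hkn : k ≤ n)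
    (x₀ : En n) (u : En n → ℝ) (V : Set (En n)) (hV : V ∈ nhds x₀)
    (hu : ContDiffOn ℝ 2 u V) (hupos : 0 < u x₀)
    (ψ0 : ℝ) (hψ0 : 0 < ψ0)
    (hpd : (Amat (Matrix.of (phess u x₀)) (gradVec u x₀) (u x₀)).PosDef)
    (Φ : ℝ → ℝ)
    (hΦ : Φ = fun t =>
      (sigmaElem k (Amat (Matrix.of (phess u x₀)) (gradVec u x₀) t)) ^ ((k:ℝ)⁻¹))
    (heq : Φ (u x₀) = ψ0 * u x₀) :
    deriv Φ (u x₀) < ψ0 :=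
  statement14_general k hk1 hkn x₀ u hupos ψ0 hpd Φ hΦ heq
end
end
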